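/- arXiv:1504.03024 — 3 statements merged into one kernel-verified Lean document; each statement's English description precedes it below -/
import Mathlib

section
/- For any δ > 0 and λ > 0, the two-dimensional Lebesgue measure of the set {z ∈ ℝ² : z₁² + z₂² ≤ δ + 2λ and |z₁ z₂| < δ/2} is at most 2δ(1 + log(2 + 4λ/δ)). -/
/-!
Write `r² = δ + 2λ`, `c = δ/2` and slice the region by vertical lines. At abscissa `x` the slice
has length at most `2r` (the disk) and at most `2c/|x|` (the hyperbolas `|xy| = c`); the two
bounds cross at `|x| = c/r`, and beyond `|x| = r` the slice is empty. Integrating the minimum of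
the two bounds gives `4c + 4c log (r² / c)`: the constant part is the area of
`[-c/r, c/r] × [-r, r]`, and the logarithm comes from `∫ 2c/t dt` over `c/r < |t| ≤ r`.
-/

open MeasureTheory Set Real
open scoped ENNReal

theorem lintegral_comp_abs (f : ℝ → ℝ≥0∞) :
    ∫⁻ x, f |x| = 2 * ∫⁻ x in Ioi 0, f x := by
  have h_pos : ∫⁻ x in Ioi 0, f |x| = ∫⁻ x in Ioi 0, f x :=
    setLIntegral_congr_fun measurableSet_Ioi fun x hx => by rw [abs_of_pos hx]
  have h_neg : ∫⁻ x in Iic 0, f |x| = ∫⁻ x in Ioi 0, f x := by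
    rw [setLIntegral_congr Iio_ae_eq_Iic.symm, ← lintegral_indicator measurableSet_Iio,
      ← lintegral_neg_eq_self, ← lintegral_indicator measurableSet_Ioi]
    refine lintegral_congr fun x => ?_
    by_cases hx : 0 < x
    · simp [indicator_of_mem, hx, abs_of_pos hx]
    · simp [indicator_of_notMem, hx]
  rw [← setLIntegral_univ, ← Iic_union_Ioi (a := 0),
    lintegral_union measurableSet_Ioi (Iic_disjoint_Ioi le_rfl), h_neg, h_pos, two_mul]

theorem lintegral_Ioc_ofReal_div {a b c : ℝ} (hc : 0 ≤ c) (ha : 0 < a) (hab : a ≤ b) :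
    ∫⁻ t in Ioc a b, ENNReal.ofReal (c / t) = ENNReal.ofReal (c * log (b / a)) := by
  have h_int : IntegrableOn (fun t => c / t) (Ioc a b) :=
    (continuousOn_const.div continuousOn_id fun t ht => (ha.trans_le ht.1).ne').integrableOn_Icc
      |>.mono_set Ioc_subset_Icc_self
  have h_nonneg : 0 ≤ᵐ[volume.restrict (Ioc a b)] fun t => c / t :=
    (ae_restrict_iff' measurableSet_Ioc).mpr
      (ae_of_all _ fun t ht => div_nonneg hc (ha.trans ht.1).le)
  rw [← ofReal_integral_eq_lintegral_ofReal h_int h_nonneg,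
    ← intervalIntegral.integral_of_le hab]
  simp_rw [div_eq_mul_inv c]
  rw [intervalIntegral.integral_const_mul, integral_inv_of_pos ha (ha.trans_le hab)]

theorem volume_setOf_abs_mul_lt {x : ℝ} (hx : x ≠ 0) (c : ℝ) :
    volume {y : ℝ | |x * y| < c} = ENNReal.ofReal (2 * c / |x|) := by
  have hx' : 0 < |x| := abs_pos.mpr hx
  have h_eq : {y : ℝ | |x * y| < c} = Ioo (-(c / |x|)) (c / |x|) := by
    ext y
    rw [mem_ofPred_eq, mem_Ioo, ← abs_lt, abs_mul, lt_div_iff₀' hx']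
  rw [h_eq, volume_Ioo]
  ring_nf

theorem setOf_sq_add_sq_le_subset_Icc (x : ℝ) {r : ℝ} (hr : 0 ≤ r) :
    {y : ℝ | x ^ 2 + y ^ 2 ≤ r ^ 2} ⊆ Icc (-r) r :=
  fun y hy => abs_le_of_sq_le_sq' (by nlinarith [sq_nonneg x, hy.out]) hr

theorem setOf_sq_add_sq_le_eq_empty {x r : ℝ} (hr : 0 ≤ r) (hx : r < |x|) :
    {y : ℝ | x ^ 2 + y ^ 2 ≤ r ^ 2} = ∅ := by
  have : r ^ 2 < x ^ 2 := sq_lt_sq.mpr (by rwa [abs_of_nonneg hr])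
  exact eq_empty_of_forall_notMem fun y hy => by nlinarith [sq_nonneg y, hy.out]

noncomputable def hyperbolicCrossSliceBound (r c t : ℝ) : ℝ≥0∞ :=
  (Icc 0 (c / r)).indicator (fun _ => ENNReal.ofReal (2 * r)) t +
    (Ioc (c / r) r).indicator (fun t => ENNReal.ofReal (2 * c / t)) t

theorem volume_hyperbolicCross_slice_le {r c : ℝ} (hr : 0 < r) (hc : 0 ≤ c) (x : ℝ) :
    volume {y : ℝ | x ^ 2 + y ^ 2 ≤ r ^ 2 ∧ |x * y| < c} ≤
      hyperbolicCrossSliceBound r c |x| := by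
  rcases le_or_gt |x| (c / r) with h_near | h_far
  · calc volume {y : ℝ | x ^ 2 + y ^ 2 ≤ r ^ 2 ∧ |x * y| < c}
        ≤ volume (Icc (-r) r) :=
          measure_mono fun y hy => setOf_sq_add_sq_le_subset_Icc x hr.le hy.1
      _ = ENNReal.ofReal (2 * r) := by rw [volume_Icc]; ring_nf
      _ ≤ hyperbolicCrossSliceBound r c |x| := by
          rw [hyperbolicCrossSliceBound,
            indicator_of_mem (show |x| ∈ Icc 0 (c / r) from ⟨abs_nonneg x, h_near⟩)]
          exact le_self_add
  rcases le_or_gt |x| r with h_in | h_out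
  · have hx : x ≠ 0 := abs_pos.mp ((div_nonneg hc hr.le).trans_lt h_far)
    calc volume {y : ℝ | x ^ 2 + y ^ 2 ≤ r ^ 2 ∧ |x * y| < c}
        ≤ volume {y : ℝ | |x * y| < c} := measure_mono fun y hy => hy.2
      _ = ENNReal.ofReal (2 * c / |x|) := volume_setOf_abs_mul_lt hx c
      _ ≤ hyperbolicCrossSliceBound r c |x| := by
          rw [hyperbolicCrossSliceBound,
            indicator_of_mem (show |x| ∈ Ioc (c / r) r from ⟨h_far, h_in⟩)]
          exact le_add_self
  · calc volume {y : ℝ | x ^ 2 + y ^ 2 ≤ r ^ 2 ∧ |x * y| < c}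
        ≤ volume {y : ℝ | x ^ 2 + y ^ 2 ≤ r ^ 2} := measure_mono fun y hy => hy.1
      _ = 0 := by rw [setOf_sq_add_sq_le_eq_empty hr.le h_out, measure_empty]
      _ ≤ _ := zero_le

theorem setLIntegral_Ioi_hyperbolicCrossSliceBound {r c : ℝ} (hr : 0 < r) (hc : 0 < c)
    (hcr : c ≤ r ^ 2) :
    ∫⁻ t in Ioi 0, hyperbolicCrossSliceBound r c t =
      ENNReal.ofReal (2 * c * (1 + log (r ^ 2 / c))) := by
  have h_corner : 0 < c / r := div_pos hc hr
  have h_corner_le : c / r ≤ r := by rwa [div_le_iff₀ hr, ← sq]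
  have h_log : 0 ≤ log (r / (c / r)) := log_nonneg ((one_le_div h_corner).mpr h_corner_le)
  have h_Icc : Icc 0 (c / r) ∩ Ioi 0 = Ioc 0 (c / r) := by
    ext t; simp only [mem_inter_iff, mem_Icc, mem_Ioi, mem_Ioc]; grind
  unfold hyperbolicCrossSliceBound
  rw [lintegral_add_left (measurable_const.indicator measurableSet_Icc),
    setLIntegral_indicator measurableSet_Icc, setLIntegral_indicator measurableSet_Ioc,
    inter_eq_left.mpr (Ioc_subset_Ioi_self.trans (Ioi_subset_Ioi h_corner.le)), h_Icc,
    setLIntegral_const, volume_Ioc,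
    lintegral_Ioc_ofReal_div (by positivity : (0 : ℝ) ≤ 2 * c) h_corner h_corner_le,
    ← ENNReal.ofReal_mul (by positivity), ← ENNReal.ofReal_add (by positivity) (by positivity)]
  congr 1
  rw [div_div_eq_mul_div, ← sq]
  field_simp
  ring

theorem volume_hyperbolicCross_le {ρ c : ℝ} (hc : 0 < c) (hcρ : c ≤ ρ) :
    volume {z : ℝ × ℝ | z.1 ^ 2 + z.2 ^ 2 ≤ ρ ∧ |z.1 * z.2| < c} ≤
      ENNReal.ofReal (4 * c * (1 + log (ρ / c))) := by
  obtain ⟨r, hr, rfl⟩ : ∃ r, 0 < r ∧ r ^ 2 = ρ :=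
    ⟨√ρ, sqrt_pos.mpr (hc.trans_le hcρ), sq_sqrt (hc.trans_le hcρ).le⟩
  have h_meas : MeasurableSet {z : ℝ × ℝ | z.1 ^ 2 + z.2 ^ 2 ≤ r ^ 2 ∧ |z.1 * z.2| < c} :=
    measurableSet_setOfPred.mpr (by fun_prop)
  calc volume {z : ℝ × ℝ | z.1 ^ 2 + z.2 ^ 2 ≤ r ^ 2 ∧ |z.1 * z.2| < c}
      = ∫⁻ x, volume {y : ℝ | x ^ 2 + y ^ 2 ≤ r ^ 2 ∧ |x * y| < c} := by
        rw [Measure.volume_eq_prod, Measure.prod_apply h_meas]; rfl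
    _ ≤ ∫⁻ x, hyperbolicCrossSliceBound r c |x| :=
        lintegral_mono (volume_hyperbolicCross_slice_le hr hc.le)
    _ = ENNReal.ofReal (4 * c * (1 + log (r ^ 2 / c))) := by
        rw [lintegral_comp_abs, setLIntegral_Ioi_hyperbolicCrossSliceBound hr hc hcρ,
          ← ENNReal.ofReal_ofNat 2, ← ENNReal.ofReal_mul zero_le_two]
        ring_nf

open MeasureTheory in
theorem volume_disk_inter_hyperbola_bound
    (δ lam : ℝ) (hδ : 0 < δ) (hlam : 0 < lam) :
    volume {z : ℝ × ℝ | z.1 ^ 2 + z.2 ^ 2 ≤ δ + 2 * lam ∧ |z.1 * z.2| < δ / 2} ≤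
      ENNReal.ofReal (2 * δ * (1 + Real.log (2 + 4 * lam / δ))) := by
  have h_ratio : (δ + 2 * lam) / (δ / 2) = 2 + 4 * lam / δ := by
    field_simp; ring
  convert volume_hyperbolicCross_le (ρ := δ + 2 * lam) (c := δ / 2) (half_pos hδ) (by linarith)
    using 2
  rw [h_ratio]
  ring
end

section
/- Let λ₁ ≥ λ₂ > 0, r > 0, δ > 0. The two-dimensional Lebesgue measure of the set {t ∈ ℝ² : t₁²/λ₁ + t₂²/λ₂ ≤ r² and |t₁² − t₂²| < δ} is at most 2δ(1 + log(2 + 4λ₂r²/δ)). -/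
/-!
The linear change of variables `t = (z₁ + z₂, z₁ - z₂)`, of determinant `-2`, turns
`t₁² - t₂²` into `4 z₁ z₂` and `t₁² + t₂²` into `2 (z₁² + z₂²)`. On the ellipse
`t₂² ≤ λ₂ r²`, so together with `|t₁² - t₂²| < δ` the preimage lies in the hyperbolic cross
`|z₁|, |z₂| < ρ, |z₁ z₂| < δ / 4` with `ρ² = λ₂ r² + δ / 2`. The vertical slice of that cross
over `z₁` has half-length `(δ / 4) / max a |z₁|`, where `a = (δ / 4) / ρ`, and integrating
gives its area `δ (1 + log (ρ² / (δ / 4)))`.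
-/

open MeasureTheory Set

theorem intervalIntegral.integral_comp_abs {f : ℝ → ℝ} (hf : Continuous f) {r : ℝ} (hr : 0 ≤ r) :
    ∫ x in -r..r, f |x| = 2 * ∫ x in 0..r, f x := by
  have hint : ∀ a b : ℝ, IntervalIntegrable (fun x => f |x|) volume a b := fun a b =>
    (hf.comp continuous_abs).intervalIntegrable a b
  have hneg : ∫ x in -r..0, f |x| = ∫ x in 0..r, f |x| := by
    simpa only [abs_neg, neg_zero] using
      (intervalIntegral.integral_comp_neg (a := 0) (b := r) (fun x => f |x|)).symm
  have hpos : ∫ x in 0..r, f |x| = ∫ x in 0..r, f x :=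
    intervalIntegral.integral_congr fun x hx => by
      rw [uIcc_of_le hr] at hx; rw [abs_of_nonneg hx.1]
  rw [← intervalIntegral.integral_add_adjacent_intervals (hint _ 0) (hint 0 _), hneg, hpos, two_mul]

theorem integral_inv_max {a b : ℝ} (ha : 0 < a) (hab : a ≤ b) :
    ∫ x in 0..b, (max a x)⁻¹ = 1 + Real.log (b / a) := by
  have hcont : Continuous fun x : ℝ => (max a x)⁻¹ :=
    (continuous_const.max continuous_id).inv₀ fun x => (ha.trans_le (le_max_left a x)).ne'
  rw [← intervalIntegral.integral_add_adjacent_intervals (b := a) (hcont.intervalIntegrable _ _)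
    (hcont.intervalIntegrable _ _)]
  have h0a : ∫ x in 0..a, (max a x)⁻¹ = ∫ x in 0..a, a⁻¹ :=
    intervalIntegral.integral_congr fun x hx => by
      rw [uIcc_of_le ha.le] at hx; rw [max_eq_left hx.2]
  have hab' : ∫ x in a..b, (max a x)⁻¹ = ∫ x in a..b, x⁻¹ :=
    intervalIntegral.integral_congr fun x hx => by
      rw [uIcc_of_le hab] at hx; rw [max_eq_right hx.1]
  rw [h0a, hab', intervalIntegral.integral_const,
    integral_inv (notMem_uIcc_of_lt ha (ha.trans_le hab)), sub_zero, smul_eq_mul,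
    mul_inv_cancel₀ ha.ne']

def hyperbolicCross (ρ c : ℝ) : Set (ℝ × ℝ) :=
  {z | |z.1| < ρ ∧ |z.2| < ρ ∧ |z.1 * z.2| < c}

/-- The half-width `c / max (c / ρ) |u|` is `min ρ (c / |u|)`, written so that it is also
correct at `u = 0`, where `c / |u|` is the junk value `0`. -/
theorem hyperbolicCross_eq_regionBetween {ρ c : ℝ} (hρ : 0 < ρ) (hc : 0 < c) :
    hyperbolicCross ρ c =
      regionBetween (fun u => -(c / max (c / ρ) |u|)) (fun u => c / max (c / ρ) |u|)
        (Ioo (-ρ) ρ) := by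
  ext ⟨u, v⟩
  have hm : 0 < max (c / ρ) |u| := lt_max_of_lt_left (by positivity)
  have hslice : v ∈ Ioo (-(c / max (c / ρ) |u|)) (c / max (c / ρ) |u|) ↔ |v| < ρ ∧ |u * v| < c := by
    rw [mem_Ioo, ← abs_lt, lt_div_iff₀ hm, mul_max_of_nonneg _ _ (abs_nonneg v), max_lt_iff,
      mul_div_assoc', div_lt_iff₀ hρ, mul_comm c ρ, mul_lt_mul_iff_of_pos_right hc, abs_mul,
      mul_comm |v|]
  change |u| < ρ ∧ |v| < ρ ∧ |u * v| < c ↔ u ∈ Ioo (-ρ) ρ ∧ v ∈ Ioo _ _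
  rw [hslice, mem_Ioo, ← abs_lt]

theorem volume_hyperbolicCross {ρ c : ℝ} (hρ : 0 < ρ) (hc : 0 < c) (hcρ : c ≤ ρ ^ 2) :
    volume (hyperbolicCross ρ c) = ENNReal.ofReal (4 * c * (1 + Real.log (ρ ^ 2 / c))) := by
  rw [hyperbolicCross_eq_regionBetween hρ hc, Measure.volume_eq_prod]
  set a := c / ρ
  have ha : 0 < a := by positivity
  have haρ : a ≤ ρ := by rw [div_le_iff₀ hρ]; nlinarith
  have hw_cont : Continuous fun t : ℝ => c / max a t :=
    continuous_const.div (continuous_const.max continuous_id) fun t =>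
      (ha.trans_le (le_max_left a t)).ne'
  have hw_int : IntegrableOn (fun u => c / max a |u|) (Ioo (-ρ) ρ) :=
    ((hw_cont.comp continuous_abs).integrableOn_Icc).mono_set Ioo_subset_Icc_self
  have hw_nonneg : ∀ u, 0 ≤ c / max a |u| := fun u =>
    div_nonneg hc.le (ha.le.trans (le_max_left _ _))
  rw [volume_regionBetween_eq_integral (f := fun u => -(c / max a |u|)) hw_int.neg hw_int
    measurableSet_Ioo fun u _ => neg_le_self (hw_nonneg u)]
  simp only [Pi.sub_apply, sub_neg_eq_add, ← two_mul]
  rw [← integral_Ioc_eq_integral_Ioo, ← intervalIntegral.integral_of_le (by linarith),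
    intervalIntegral.integral_const_mul, intervalIntegral.integral_comp_abs hw_cont hρ.le]
  simp only [div_eq_mul_inv c]
  have hρa : ρ / a = ρ ^ 2 / c := by rw [div_div_eq_mul_div, sq]
  rw [intervalIntegral.integral_const_mul, integral_inv_max ha haρ, hρa]
  ring_nf

def sumDiffMap : ℝ × ℝ →ₗ[ℝ] ℝ × ℝ :=
  (LinearMap.fst ℝ ℝ ℝ + LinearMap.snd ℝ ℝ ℝ).prod (LinearMap.fst ℝ ℝ ℝ - LinearMap.snd ℝ ℝ ℝ)

@[simp]
theorem sumDiffMap_apply (z : ℝ × ℝ) : sumDiffMap z = (z.1 + z.2, z.1 - z.2) := rfl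

theorem det_sumDiffMap : LinearMap.det sumDiffMap = -2 := by
  rw [← LinearMap.det_toMatrix (Module.Basis.finTwoProd ℝ), Matrix.det_fin_two]
  simp [LinearMap.toMatrix_apply]
  norm_num

theorem volume_eq_two_mul_volume_preimage_sumDiffMap (s : Set (ℝ × ℝ)) :
    volume s = 2 * volume (sumDiffMap ⁻¹' s) := by
  rw [Measure.addHaar_preimage_linearMap _ (by rw [det_sumDiffMap]; norm_num), det_sumDiffMap,
    ← mul_assoc]
  have : 2 * ENNReal.ofReal |(-2 : ℝ)⁻¹| = 1 := by
    rw [abs_inv, abs_neg, abs_two, ENNReal.ofReal_inv_of_pos two_pos, ENNReal.ofReal_ofNat,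
      ENNReal.mul_inv_cancel two_ne_zero ENNReal.ofNat_ne_top]
  rw [this, one_mul]

theorem preimage_sumDiffMap_subset_hyperbolicCross {lam₁ lam₂ r δ : ℝ} (h1 : 0 ≤ lam₁)
    (h2 : 0 < lam₂) :
    sumDiffMap ⁻¹' {t | t.1 ^ 2 / lam₁ + t.2 ^ 2 / lam₂ ≤ r ^ 2 ∧ |t.1 ^ 2 - t.2 ^ 2| < δ} ⊆
      hyperbolicCross √(lam₂ * r ^ 2 + δ / 2) (δ / 4) := by
  rintro ⟨u, v⟩ ⟨hell, hhyp⟩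
  simp only [sumDiffMap_apply] at hell hhyp
  have hdiff : (u - v) ^ 2 ≤ lam₂ * r ^ 2 := by
    have : (u - v) ^ 2 / lam₂ ≤ r ^ 2 := by
      linarith [div_nonneg (sq_nonneg (u + v)) h1]
    rwa [div_le_iff₀ h2, mul_comm] at this
  have hprod : (u + v) ^ 2 - (u - v) ^ 2 = 4 * (u * v) := by ring
  rw [hprod, abs_mul, abs_of_pos four_pos] at hhyp
  have hsum : u ^ 2 + v ^ 2 < lam₂ * r ^ 2 + δ / 2 := by
    linarith [le_abs_self (u * v), show u ^ 2 + v ^ 2 = (u - v) ^ 2 + 2 * (u * v) by ring]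
  refine ⟨?_, ?_, by linarith⟩ <;> rw [Real.lt_sqrt (abs_nonneg _), sq_abs] <;> nlinarith

open MeasureTheory in
theorem volume_ellipse_inter_hyperbola_bound_general
    (lam₁ lam₂ r δ : ℝ) (h12 : lam₂ ≤ lam₁) (h2 : 0 < lam₂) (hδ : 0 < δ) :
    volume {t : ℝ × ℝ | t.1 ^ 2 / lam₁ + t.2 ^ 2 / lam₂ ≤ r ^ 2 ∧ |t.1 ^ 2 - t.2 ^ 2| < δ} ≤
      ENNReal.ofReal (2 * δ * (1 + Real.log (2 + 4 * lam₂ * r ^ 2 / δ))) := by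
  have hP : 0 < lam₂ * r ^ 2 + δ / 2 := by positivity
  have hδP : δ / 4 ≤ √(lam₂ * r ^ 2 + δ / 2) ^ 2 := by
    rw [Real.sq_sqrt hP.le]; linarith [mul_nonneg h2.le (sq_nonneg r)]
  have hratio : (lam₂ * r ^ 2 + δ / 2) / (δ / 4) = 2 + 4 * lam₂ * r ^ 2 / δ := by
    field_simp; ring
  calc _ = 2 * volume (sumDiffMap ⁻¹' _) := volume_eq_two_mul_volume_preimage_sumDiffMap _
    _ ≤ 2 * volume (hyperbolicCross √(lam₂ * r ^ 2 + δ / 2) (δ / 4)) := by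
      gcongr
      exact preimage_sumDiffMap_subset_hyperbolicCross (h2.le.trans h12) h2
    _ = _ := by
      rw [volume_hyperbolicCross (Real.sqrt_pos.2 hP) (by positivity) hδP, Real.sq_sqrt hP.le,
        hratio, ← ENNReal.ofReal_ofNat 2, ← ENNReal.ofReal_mul zero_le_two]
      ring_nf

open MeasureTheory in
theorem volume_ellipse_inter_hyperbola_bound
    (lam₁ lam₂ r δ : ℝ) (h12 : lam₂ ≤ lam₁) (h2 : 0 < lam₂) (hr : 0 < r) (hδ : 0 < δ) :
    volume {t : ℝ × ℝ | t.1 ^ 2 / lam₁ + t.2 ^ 2 / lam₂ ≤ r ^ 2 ∧ |t.1 ^ 2 - t.2 ^ 2| < δ} ≤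
      ENNReal.ofReal (2 * δ * (1 + Real.log (2 + 4 * lam₂ * r ^ 2 / δ))) :=
  volume_ellipse_inter_hyperbola_bound_general lam₁ lam₂ r δ h12 h2 hδ
end

section
/- Let r > 0, let S ⊆ B_n(0,L) be nonempty with covering number N_S(ρ) at scale ρ > 0, let x ∈ B_n(0,L), and let A ∈ ℝ^{m×n} be a random matrix with independent rows each uniformly distributed on B_n(0,r). Then there exist points s₁,…,s_{N_S(ρ)} ∈ S such that P[∃ u ∈ S with ‖|Au| − |Ax|‖ ≤ ρ] ≤ Σ_{l=1}^{N_S(ρ)} P[||aᵀs_l|² − |aᵀx|²| ≤ 2Lr(2r+1)ρ]^m, where a is uniformly distributed on B_n(0,r). -/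
open MeasureTheory ProbabilityTheory

/-- Covering number of a set `S` at scale `ρ`: the minimal number of open balls of
radius `ρ` (arbitrary centers) needed to cover `S`. -/
noncomputable def coveringNumber {n : ℕ} (S : Set (EuclideanSpace ℝ (Fin n))) (ρ : ℝ) : ℕ :=
  sInf {k : ℕ | ∃ c : Fin k → EuclideanSpace ℝ (Fin n), S ⊆ ⋃ i, Metric.ball (c i) ρ}

theorem covering_union_bound_phaseless
    (n m : ℕ) (r L ρ : ℝ) (hr : 0 < r) (hL : 0 < L) (hρ : 0 < ρ)
    (S : Set (EuclideanSpace ℝ (Fin n))) (hS : S.Nonempty)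
    (hSL : S ⊆ Metric.ball (0 : EuclideanSpace ℝ (Fin n)) L)
    (x : EuclideanSpace ℝ (Fin n)) (hx : x ∈ Metric.ball (0 : EuclideanSpace ℝ (Fin n)) L) :
    ∃ s : Fin (coveringNumber S ρ) → EuclideanSpace ℝ (Fin n),
      (∀ l, s l ∈ S) ∧
      (Measure.pi fun _ : Fin m =>
          ProbabilityTheory.cond volume (Metric.ball (0 : EuclideanSpace ℝ (Fin n)) r))
        {A : Fin m → EuclideanSpace ℝ (Fin n) | ∃ u ∈ S,
          Real.sqrt (∑ i, (|(inner ℝ (A i) u : ℝ)| - |(inner ℝ (A i) x : ℝ)|) ^ 2) ≤ ρ} ≤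
      ∑ l : Fin (coveringNumber S ρ),
        (ProbabilityTheory.cond volume (Metric.ball (0 : EuclideanSpace ℝ (Fin n)) r)
          {a : EuclideanSpace ℝ (Fin n) |
            |(|(inner ℝ a (s l) : ℝ)| ^ 2 - |(inner ℝ a x : ℝ)| ^ 2)| ≤ 2 * L * r * (2 * r + 1) * ρ}) ^ m := by
  classical
  -- a covering with `coveringNumber S ρ` balls exists
  have htb : TotallyBounded S :=
    (isCompact_closedBall (0 : EuclideanSpace ℝ (Fin n)) L).totallyBounded.subset
      (hSL.trans Metric.ball_subset_closedBall)
  obtain ⟨t, htfin, htcov⟩ := (Metric.totallyBounded_iff.mp htb) ρ hρ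
  have hne : {k : ℕ | ∃ c : Fin k → EuclideanSpace ℝ (Fin n),
      S ⊆ ⋃ i, Metric.ball (c i) ρ}.Nonempty := by
    refine ⟨htfin.toFinset.card, fun i => (htfin.toFinset.equivFin.symm i : _), ?_⟩
    intro u hu
    obtain ⟨y, hyt, hy⟩ := Set.mem_iUnion₂.mp (htcov hu)
    refine Set.mem_iUnion.mpr ⟨htfin.toFinset.equivFin ⟨y, htfin.mem_toFinset.mpr hyt⟩, ?_⟩
    simpa using hy
  obtain ⟨c, hc⟩ : ∃ c : Fin (coveringNumber S ρ) → EuclideanSpace ℝ (Fin n),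
      S ⊆ ⋃ i, Metric.ball (c i) ρ := Nat.sInf_mem hne
  -- pick (almost) centers inside S
  set s : Fin (coveringNumber S ρ) → EuclideanSpace ℝ (Fin n) := fun l =>
    if h : (S ∩ Metric.ball (c l) ρ).Nonempty then h.choose else hS.choose with hs_def
  have hsS : ∀ l, s l ∈ S := by
    intro l
    by_cases h : (S ∩ Metric.ball (c l) ρ).Nonempty
    · simp only [hs_def, dif_pos h]; exact h.choose_spec.1
    · simp only [hs_def, dif_neg h]; exact hS.choose_spec
  refine ⟨s, hsS, ?_⟩
  set μ := ProbabilityTheory.cond volume (Metric.ball (0 : EuclideanSpace ℝ (Fin n)) r) with hμ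
  have hball0 : volume (Metric.ball (0 : EuclideanSpace ℝ (Fin n)) r) ≠ 0 :=
    (Metric.measure_ball_pos volume 0 hr).ne'
  have hballtop : volume (Metric.ball (0 : EuclideanSpace ℝ (Fin n)) r) ≠ ⊤ :=
    measure_ball_lt_top.ne
  haveI : IsProbabilityMeasure μ := cond_isProbabilityMeasure_of_finite hball0 hballtop
  have hcompl : μ (Metric.ball (0 : EuclideanSpace ℝ (Fin n)) r)ᶜ = 0 := by
    rw [hμ, ProbabilityTheory.cond_apply measurableSet_ball]
    simp
  set C : ℝ := 2 * L * r * (2 * r + 1) * ρ with hC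
  set F : Fin (coveringNumber S ρ) → Set (EuclideanSpace ℝ (Fin n)) := fun l =>
    {a : EuclideanSpace ℝ (Fin n) |
      |(|(inner ℝ a (s l) : ℝ)| ^ 2 - |(inner ℝ a x : ℝ)| ^ 2)| ≤ C} with hF_def
  have hFmeas : ∀ l, MeasurableSet (F l) := by
    intro l
    have hcont : Continuous fun a : EuclideanSpace ℝ (Fin n) =>
        |(|(inner ℝ a (s l) : ℝ)| ^ 2 - |(inner ℝ a x : ℝ)| ^ 2)| := by
      apply Continuous.abs
      exact (((continuous_id.inner continuous_const).abs.pow 2).sub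
        ((continuous_id.inner continuous_const).abs.pow 2))
    exact measurableSet_le hcont.measurable measurable_const
  set P : Set (Fin m → EuclideanSpace ℝ (Fin n)) :=
    Set.univ.pi fun _ => Metric.ball (0 : EuclideanSpace ℝ (Fin n)) r with hP
  set E : Set (Fin m → EuclideanSpace ℝ (Fin n)) :=
    {A : Fin m → EuclideanSpace ℝ (Fin n) | ∃ u ∈ S,
      Real.sqrt (∑ i, (|(inner ℝ (A i) u : ℝ)| - |(inner ℝ (A i) x : ℝ)|) ^ 2) ≤ ρ} with hE
  have hPnull : (Measure.pi fun _ : Fin m => μ) Pᶜ = 0 := by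
    have hsub' : Pᶜ ⊆ ⋃ i : Fin m,
        Function.eval i ⁻¹' (Metric.ball (0 : EuclideanSpace ℝ (Fin n)) r)ᶜ := by
      intro A hA
      simp only [hP, Set.mem_compl_iff, Set.mem_pi, Set.mem_univ, forall_true_left] at hA
      push_neg at hA
      obtain ⟨i, hi⟩ := hA
      exact Set.mem_iUnion.mpr ⟨i, hi⟩
    exact measure_mono_null hsub'
      (measure_iUnion_null fun i : Fin m =>
        Measure.pi_eval_preimage_null (μ := fun _ : Fin m => μ) (i := i) hcompl)
  -- the key inclusion
  have hsub : E ∩ P ⊆ ⋃ l, Set.univ.pi fun _ : Fin m => F l := by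
    rintro A ⟨⟨u, huS, hAu⟩, hAP⟩
    obtain ⟨l, hul⟩ := Set.mem_iUnion.mp (hc huS)
    have hne' : (S ∩ Metric.ball (c l) ρ).Nonempty := ⟨u, huS, hul⟩
    have hsl : s l ∈ S ∩ Metric.ball (c l) ρ := by
      simp only [hs_def, dif_pos hne']; exact hne'.choose_spec
    have hslu : ‖s l - u‖ ≤ 2 * ρ := by
      have h1 : dist (s l) (c l) < ρ := hsl.2
      have h2 : dist u (c l) < ρ := hul
      have := dist_triangle (s l) (c l) u
      rw [← dist_eq_norm]
      rw [dist_comm u (c l)] at h2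
      linarith
    have hsum : (∑ i, (|(inner ℝ (A i) u : ℝ)| - |(inner ℝ (A i) x : ℝ)|) ^ 2) ≤ ρ ^ 2 := by
      have h0 : (0:ℝ) ≤ ∑ i, (|(inner ℝ (A i) u : ℝ)| - |(inner ℝ (A i) x : ℝ)|) ^ 2 :=
        Finset.sum_nonneg fun _ _ => sq_nonneg _
      nlinarith [Real.sq_sqrt h0, Real.sqrt_nonneg
        (∑ i, (|(inner ℝ (A i) u : ℝ)| - |(inner ℝ (A i) x : ℝ)|) ^ 2)]
    refine Set.mem_iUnion.mpr ⟨l, fun i _ => ?_⟩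
    -- per-coordinate bound
    have ha : ‖A i‖ ≤ r :=
      le_of_lt (mem_ball_zero_iff.mp (hAP i (Set.mem_univ i)))
    have hu_norm : ‖u‖ ≤ L := le_of_lt (mem_ball_zero_iff.mp (hSL huS))
    have hx_norm : ‖x‖ ≤ L := le_of_lt (mem_ball_zero_iff.mp hx)
    set α := |(inner ℝ (A i) u : ℝ)| with hα
    set β := |(inner ℝ (A i) x : ℝ)| with hβ
    set γ := |(inner ℝ (A i) (s l) : ℝ)| with hγ
    have hterm : (α - β) ^ 2 ≤ ρ ^ 2 :=
      le_trans (Finset.single_le_sum (fun j _ => sq_nonneg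
        (|(inner ℝ (A j) u : ℝ)| - |(inner ℝ (A j) x : ℝ)|)) (Finset.mem_univ i)) hsum
    have hαβ : |α - β| ≤ ρ := abs_le.mpr ⟨by nlinarith, by nlinarith⟩
    have hγα : |γ - α| ≤ r * (2 * ρ) := by
      calc |γ - α| ≤ |(inner ℝ (A i) (s l) : ℝ) - (inner ℝ (A i) u : ℝ)| :=
            abs_abs_sub_abs_le_abs_sub _ _
        _ = |(inner ℝ (A i) ((s l) - u) : ℝ)| := by rw [inner_sub_right]
        _ ≤ ‖A i‖ * ‖s l - u‖ := abs_real_inner_le_norm _ _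
        _ ≤ r * (2 * ρ) := by
            apply mul_le_mul ha hslu (norm_nonneg _) hr.le
    have hγL : γ ≤ r * L := by
      calc γ ≤ ‖A i‖ * ‖s l‖ := abs_real_inner_le_norm _ _
        _ ≤ r * L := mul_le_mul ha (le_of_lt (mem_ball_zero_iff.mp (hSL (hsl.1))))
            (norm_nonneg _) hr.le
    have hβL : β ≤ r * L := by
      calc β ≤ ‖A i‖ * ‖x‖ := abs_real_inner_le_norm _ _
        _ ≤ r * L := mul_le_mul ha hx_norm (norm_nonneg _) hr.le
    have hγ0 : 0 ≤ γ := abs_nonneg _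
    have hβ0 : 0 ≤ β := abs_nonneg _
    have hγβ : |γ - β| ≤ (2 * r + 1) * ρ := by
      calc |γ - β| ≤ |γ - α| + |α - β| := abs_sub_le _ _ _
        _ ≤ r * (2 * ρ) + ρ := add_le_add hγα hαβ
        _ = (2 * r + 1) * ρ := by ring
    show |γ ^ 2 - β ^ 2| ≤ C
    have key : |γ ^ 2 - β ^ 2| ≤ ((2 * r + 1) * ρ) * (2 * (r * L)) := by
      have heq : γ ^ 2 - β ^ 2 = (γ - β) * (γ + β) := by ring
      rw [heq, abs_mul]
      have h2 : |γ + β| ≤ 2 * (r * L) := by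
        rw [abs_of_nonneg (add_nonneg hγ0 hβ0)]; linarith
      exact mul_le_mul hγβ h2 (abs_nonneg _) (by positivity)
    calc |γ ^ 2 - β ^ 2| ≤ ((2 * r + 1) * ρ) * (2 * (r * L)) := key
      _ = C := by rw [hC]; ring
  -- put everything together
  calc (Measure.pi fun _ : Fin m => μ) E
      ≤ (Measure.pi fun _ : Fin m => μ) ((E ∩ P) ∪ Pᶜ) := by
        refine measure_mono fun A hA => ?_
        by_cases h : A ∈ P
        · exact Or.inl ⟨hA, h⟩
        · exact Or.inr h
    _ ≤ (Measure.pi fun _ : Fin m => μ) (E ∩ P) + (Measure.pi fun _ : Fin m => μ) Pᶜ :=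
        measure_union_le _ _
    _ = (Measure.pi fun _ : Fin m => μ) (E ∩ P) := by rw [hPnull, add_zero]
    _ ≤ (Measure.pi fun _ : Fin m => μ) (⋃ l, Set.univ.pi fun _ : Fin m => F l) :=
        measure_mono hsub
    _ ≤ ∑ l, (Measure.pi fun _ : Fin m => μ) (Set.univ.pi fun _ : Fin m => F l) :=
        measure_iUnion_fintype_le _ _
    _ = ∑ l, (μ (F l)) ^ m := by
        refine Finset.sum_congr rfl fun l _ => ?_
        rw [Measure.pi_pi]
        simp [Finset.prod_const]
end
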